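/- Let G be a finite DAG with edge weights in a commutative ring and let z be an intermediate vertex (neither a source nor a sink) with u ≠ z ≠ v. Then the sum of weighted path-products from u to v in G equals the sum of weighted path-products from u to v in the graph G' obtained by eliminating z: delete z and, for every pair (p, s) with p a predecessor of z and s a successor of z, add a new edge from p to s with weight c(p,z)·c(z,s). -/

import Mathlib

open scoped Classical

def IsPath {V : Type*} (E : V → V → Prop) (u v : V) (l : List V) : Prop :=
  l ≠ [] ∧ l.Chain' E ∧ l.head? = some u ∧ l.getLast? = some v

def pathWeight {V R : Type*} [CommRing R] (c : V → V → R) (l : List V) : R :=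
  ((l.zip l.tail).map fun p => c p.1 p.2).prod

noncomputable def pathSum {V R : Type*} [CommRing R] (E : V → V → Prop) (c : V → V → R)
    (u v : V) : R :=
  ∑ᶠ l ∈ {l : List V | IsPath E u v l}, pathWeight c l

/-!
Over a DAG the path sums `P x = pathSum E c x v` are the unique solution of the first-step
recursion `P x = [x = v] + ∑_{x → w} c x w * P w`. For `x ≠ z`, substituting the recursion at `z`
(where `z ≠ v` and there is no loop `z → z`) into the one at `x` gives exactly the recursion of
the eliminated graph, satisfied by `P` with its value at `z` replaced by `0`; and `z` is isolated
in the eliminated graph, so `0` is indeed its path sum to `v`.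
-/

open Function Relation

section

variable {V R : Type*} [CommRing R] {E : V → V → Prop}

theorem isPath_iff {u v : V} {l : List V} :
    IsPath E u v l ↔ l ≠ [] ∧ l.IsChain E ∧ l.head? = some u ∧ l.getLast? = some v :=
  Iff.rfl

theorem IsPath.head_eq {u v : V} {l : List V} (hl : IsPath E u v l) : l.head? = some u :=
  (isPath_iff.1 hl).2.2.1

theorem IsPath.ne_nil {u v : V} {l : List V} (hl : IsPath E u v l) : l ≠ [] :=
  (isPath_iff.1 hl).1

theorem IsPath.eq_cons {u v : V} {l : List V} (hl : IsPath E u v l) : ∃ t, l = u :: t := by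
  obtain ⟨hne, -, hhead, -⟩ := hl
  exact ⟨l.tail, by cases l <;> simp_all⟩

theorem IsPath.nodup (hacyc : ∀ a, ¬ TransGen E a a) {u v : V} {l : List V}
    (hl : IsPath E u v l) : l.Nodup := by
  have hpw : l.Pairwise (TransGen E) :=
    ((isPath_iff.1 hl).2.1.imp fun _ _ => TransGen.single).pairwise
  have : Std.Irrefl (TransGen E) := ⟨hacyc⟩
  exact hpw.nodup

theorem setOf_isPath_finite [Fintype V] (hacyc : ∀ a, ¬ TransGen E a a) (u v : V) :
    {l : List V | IsPath E u v l}.Finite :=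
  (List.finite_length_le V (Fintype.card V)).subset fun _ hl => (hl.nodup hacyc).length_le_card

theorem setOf_isPath_eq (u v : V) :
    {l : List V | IsPath E u v l} =
      {l | u = v ∧ l = [u]} ∪ ⋃ w, List.cons u '' {l | E u w ∧ IsPath E w v l} := by
  ext l
  rcases l with _ | ⟨a, _ | ⟨b, t⟩⟩ <;> simp [isPath_iff] <;> grind

theorem pathWeight_cons_cons (c : V → V → R) (a b : V) (l : List V) :
    pathWeight c (a :: b :: l) = c a b * pathWeight c (b :: l) := by
  simp [pathWeight]

theorem pathSum_eq_ite_add_sum [Fintype V] (hacyc : ∀ a, ¬ TransGen E a a) (c : V → V → R)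
    (u v : V) :
    pathSum E c u v = (if u = v then 1 else 0) +
      ∑ w, if E u w then c u w * pathSum E c w v else 0 := by
  have hfin : ∀ w, (List.cons u '' {l | E u w ∧ IsPath E w v l}).Finite := fun w =>
    ((setOf_isPath_finite hacyc w v).subset fun _ hl => hl.2).image _
  have hdisj : Disjoint {l : List V | u = v ∧ l = [u]}
      (⋃ w, List.cons u '' {l | E u w ∧ IsPath E w v l}) := by
    simp only [Set.disjoint_left, Set.mem_iUnion, Set.mem_image]
    rintro _ ⟨-, rfl⟩ ⟨w, l, ⟨-, hl⟩, heq⟩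
    exact hl.ne_nil (List.cons_injective heq)
  have hpairwise :
      Pairwise (Disjoint on fun w => List.cons u '' {l | E u w ∧ IsPath E w v l}) := by
    intro w₁ w₂ hne
    simp only [onFun, Set.disjoint_left, Set.mem_image]
    rintro _ ⟨l, ⟨-, hl₁⟩, rfl⟩ ⟨l', ⟨-, hl₂⟩, heq⟩
    cases List.cons_injective heq
    exact hne (Option.some_injective _ (hl₁.head_eq.symm.trans hl₂.head_eq))
  rw [pathSum, setOf_isPath_eq,
    finsum_mem_union hdisj ((Set.finite_singleton [u]).subset fun _ h => h.2)
      (Set.finite_iUnion hfin),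
    finsum_mem_iUnion hpairwise hfin]
  congr 1
  · by_cases h : u = v <;> simp [h, pathWeight]
  · rw [finsum_eq_sum_of_fintype]
    refine Finset.sum_congr rfl fun w _ => ?_
    rw [finsum_mem_image List.cons_injective.injOn]
    split_ifs with h
    · simp only [h, true_and, pathSum]
      rw [mul_finsum_mem' _ _ (setOf_isPath_finite hacyc w v)]
      refine finsum_mem_congr rfl fun l hl => ?_
      obtain ⟨t, rfl⟩ := hl.eq_cons
      exact pathWeight_cons_cons c u w t
    · simp [h]

theorem eq_pathSum_of_forall_eq [Fintype V] (hacyc : ∀ a, ¬ TransGen E a a) (c : V → V → R)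
    (v : V) (f : V → R)
    (hf : ∀ x, f x = (if x = v then 1 else 0) + ∑ w, if E x w then c x w * f w else 0) (x : V) :
    f x = pathSum E c x v := by
  have : IsTrans V (swap (TransGen E)) := ⟨fun _ _ _ h₁ h₂ => h₂.trans h₁⟩
  have : Std.Irrefl (swap (TransGen E)) := ⟨hacyc⟩
  induction x using (Finite.wellFounded_of_trans_of_irrefl (swap (TransGen E))).induction with
  | _ x ih =>
  rw [hf, pathSum_eq_ite_add_sum hacyc]
  congr 1
  refine Finset.sum_congr rfl fun w _ => ?_
  split_ifs with h
  · rw [ih w (TransGen.single h)]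
  · rfl

def elimRel (E : V → V → Prop) (z : V) : V → V → Prop :=
  fun a b => (E a b ∧ a ≠ z ∧ b ≠ z) ∨ (E a z ∧ E z b)

noncomputable def elimWeight (E : V → V → Prop) (c : V → V → R) (z : V) : V → V → R :=
  fun a b => (if E a b ∧ a ≠ z ∧ b ≠ z then c a b else 0) +
    (if E a z ∧ E z b then c a z * c z b else 0)

theorem transGen_of_elimRel {z a b : V} (h : elimRel E z a b) : TransGen E a b := by
  rcases h with ⟨h, -, -⟩ | ⟨h₁, h₂⟩
  · exact .single h
  · exact .head h₁ (.single h₂)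

theorem not_transGen_elimRel_self (hacyc : ∀ a, ¬ TransGen E a a) (z a : V) :
    ¬ TransGen (elimRel E z) a a := fun h =>
  hacyc a (TransGen.lift' id (fun _ _ => transGen_of_elimRel) a a h)

theorem ite_elimRel_eq (hacyc : ∀ a, ¬ TransGen E a a) (c : V → V → R) (g : V → R) {z x : V}
    (hx : x ≠ z) (w : V) :
    (if elimRel E z x w then elimWeight E c z x w * (if w = z then 0 else g w) else 0) =
      (if w ≠ z then (if E x w then c x w * g w else 0) else 0) +
        if E x z then c x z * (if E z w then c z w * g w else 0) else 0 := by
  have hzz : ¬ E z z := fun h => hacyc z (.single h)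
  unfold elimRel elimWeight
  by_cases hw : w = z
  · subst hw
    simp [hzz]
  by_cases hxw : E x w <;> by_cases hxz : E x z <;> by_cases hzw : E z w <;>
    simp [*, add_mul, mul_assoc]

theorem pathSum_elimRel [Fintype V] (hacyc : ∀ a, ¬ TransGen E a a) (c : V → V → R)
    {z u v : V} (huz : u ≠ z) (hvz : v ≠ z) :
    pathSum (elimRel E z) (elimWeight E c z) u v = pathSum E c u v := by
  suffices h : ∀ x, (if x = z then 0 else pathSum E c x v) =
      pathSum (elimRel E z) (elimWeight E c z) x v by
    simpa [huz] using (h u).symm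
  refine eq_pathSum_of_forall_eq (not_transGen_elimRel_self hacyc z) _ v _ fun x => ?_
  by_cases hx : x = z
  · have hz : ∀ w, ¬ elimRel E z z w := by
      rintro w (⟨-, h, -⟩ | ⟨h, -⟩)
      exacts [h rfl, hacyc z (.single h)]
    simp [hx, hvz.symm, hz]
  rw [if_neg hx, pathSum_eq_ite_add_sum hacyc,
    Finset.sum_congr rfl fun w _ => ite_elimRel_eq hacyc c (pathSum E c · v) hx w,
    Finset.sum_add_distrib, ← Finset.sum_erase_add _ _ (Finset.mem_univ z)]
  congr 2
  · rw [← Finset.filter_ne', Finset.sum_filter]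
  · rw [pathSum_eq_ite_add_sum hacyc c z v, if_neg hvz.symm, zero_add]
    split_ifs <;> simp [Finset.mul_sum]

end

theorem stmt2_general {V R : Type*} [Fintype V] [CommRing R] (E : V → V → Prop)
    (hacyc : ∀ a : V, ¬ Relation.TransGen E a a) (c : V → V → R)
    (z u v : V)
    (huz : u ≠ z) (hvz : v ≠ z) :
    pathSum (fun a b => (E a b ∧ a ≠ z ∧ b ≠ z) ∨ (E a z ∧ E z b))
      (fun a b => (if E a b ∧ a ≠ z ∧ b ≠ z then c a b else 0) +
        (if E a z ∧ E z b then c a z * c z b else 0)) u v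
      = pathSum E c u v :=
  pathSum_elimRel hacyc c huz hvz

/-- Correctness of vertex elimination: eliminating an intermediate vertex `z`
(deleting `z` and adding, for each predecessor `p` and successor `s` of `z`, an edge
`p → s` with weight `c p z * c z s`, added to the weight of a pre-existing edge)
preserves the path sum between any two vertices `u ≠ z ≠ v`. -/
theorem stmt2 {V R : Type*} [Fintype V] [CommRing R] (E : V → V → Prop)
    (hacyc : ∀ a : V, ¬ Relation.TransGen E a a) (c : V → V → R)
    (z u v : V) (hz_in : ∃ p, E p z) (hz_out : ∃ s, E z s)
    (huz : u ≠ z) (hvz : v ≠ z) :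
    pathSum (fun a b => (E a b ∧ a ≠ z ∧ b ≠ z) ∨ (E a z ∧ E z b))
      (fun a b => (if E a b ∧ a ≠ z ∧ b ≠ z then c a b else 0) +
        (if E a z ∧ E z b then c a z * c z b else 0)) u v
      = pathSum E c u v :=
  stmt2_general E hacyc c z u v huz hvz
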